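/- If f : ℝⁿ → ℝ is (γ,μ)-strongly quasar-convex and L-smooth, then L ≥ γμ/(2−γ). -/

import Mathlib

open RealInnerProductSpace

/-!
Put `r = ‖x - x*‖` and `I = ⟪∇f x, x - x*⟫` for any `x ≠ x*`. Since `∇f x* = 0`, smoothness gives
`I ≤ L r²` and, by the descent lemma, `f x* ≤ f x - I + L r² / 2`, while strong quasar-convexity
gives `f x* ≥ f x - I / γ + μ r² / 2`. Eliminating `f x - f x*` and then `I` (whose coefficient
`1 - γ` is nonnegative) leaves `γ μ r² ≤ (2 - γ) L r²`.
-/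

section StrongQuasarConvex

variable {E : Type*} [NormedAddCommGroup E] [InnerProductSpace ℝ E] [CompleteSpace E]

def StrongQuasarConvex (γ μ : ℝ) (f : E → ℝ) (xstar : E) : Prop :=
  ∀ x, f xstar ≥ f x + (1/γ) * ⟪gradient f x, xstar - x⟫ + (μ/2) * ‖xstar - x‖^2

theorem IsLocalMin.gradient_eq_zero {f : E → ℝ} {a : E} (h : IsLocalMin f a) :
    gradient f a = 0 := by
  simp [gradient, h.fderiv_eq_zero]

theorem hasDerivAt_comp_add_smul {f : E → ℝ} (hf : Differentiable ℝ f) (x d : E) (t : ℝ) :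
    HasDerivAt (fun t : ℝ => f (x + t • d)) ⟪gradient f (x + t • d), d⟫ t := by
  have hline : HasDerivAt (fun t : ℝ => x + t • d) d t := by
    simpa using ((hasDerivAt_id t).smul_const d).const_add x
  have hgrad := hasGradientAt_iff_hasFDerivAt.mp (hf (x + t • d)).hasGradientAt
  simpa [Function.comp_def] using hgrad.comp_hasDerivAt t hline

theorem le_add_inner_gradient_add_of_lipschitz_gradient {f : E → ℝ} {L : ℝ}
    (hf : Differentiable ℝ f) (hsmooth : ∀ x y, ‖gradient f x - gradient f y‖ ≤ L * ‖x - y‖)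
    (x y : E) : f y ≤ f x + ⟪gradient f x, y - x⟫ + L / 2 * ‖y - x‖ ^ 2 := by
  set d := y - x
  let φ : ℝ → ℝ := fun t => f (x + t • d) - t * ⟪gradient f x, d⟫ - L / 2 * ‖d‖ ^ 2 * t ^ 2
  let φ' : ℝ → ℝ := fun t =>
    ⟪gradient f (x + t • d) - gradient f x, d⟫ - L * ‖d‖ ^ 2 * t
  have hφ : ∀ t, HasDerivAt φ (φ' t) t := by
    intro t
    have hlin := (hasDerivAt_id' t).mul_const ⟪gradient f x, d⟫
    have hsq := (hasDerivAt_pow 2 t).const_mul (L / 2 * ‖d‖ ^ 2)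
    refine (((hasDerivAt_comp_add_smul hf x d t).fun_sub hlin).fun_sub hsq).congr_deriv ?_
    simp only [φ', inner_sub_left]
    ring
  have hφ'_nonpos : ∀ t ∈ interior (Set.Ici (0:ℝ)), φ' t ≤ 0 := by
    intro t ht
    rw [interior_Ici, Set.mem_Ioi] at ht
    have hgrad : ‖gradient f (x + t • d) - gradient f x‖ ≤ L * (t * ‖d‖) := by
      simpa [norm_smul, abs_of_pos ht] using hsmooth (x + t • d) x
    have hcs := (real_inner_le_norm _ d).trans (mul_le_mul_of_nonneg_right hgrad (norm_nonneg d))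
    simp only [φ']
    nlinarith
  have hanti : AntitoneOn φ (Set.Ici 0) :=
    antitoneOn_of_hasDerivWithinAt_nonpos (convex_Ici 0)
      (fun t _ => (hφ t).continuousAt.continuousWithinAt)
      (fun t _ => (hφ t).hasDerivWithinAt) hφ'_nonpos
  have h10 : φ 1 ≤ φ 0 := hanti Set.self_mem_Ici (by norm_num) zero_le_one
  have hy : x + d = y := add_sub_cancel x y
  simp only [φ, one_smul, zero_smul, add_zero, hy] at h10
  linarith

theorem StrongQuasarConvex.mul_le_two_sub_mul_of_lipschitz_gradient [Nontrivial E]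
    {f : E → ℝ} {γ μ L : ℝ} {xstar : E} (hf : Differentiable ℝ f) (hγ : γ ∈ Set.Ioc (0:ℝ) 1)
    (hcrit : gradient f xstar = 0) (hquasar : StrongQuasarConvex γ μ f xstar)
    (hsmooth : ∀ x y, ‖gradient f x - gradient f y‖ ≤ L * ‖x - y‖) :
    γ * μ ≤ (2 - γ) * L := by
  obtain ⟨hγ0, hγ1⟩ := hγ
  obtain ⟨x, hx⟩ := exists_ne xstar
  have hr : 0 < ‖x - xstar‖ ^ 2 := by positivity [sub_ne_zero.mpr hx]
  set I := ⟪gradient f x, x - xstar⟫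
  have hI : I ≤ L * ‖x - xstar‖ ^ 2 := by
    calc I = ⟪gradient f x - gradient f xstar, x - xstar⟫ := by
          rw [hcrit, sub_zero]
      _ ≤ ‖gradient f x - gradient f xstar‖ * ‖x - xstar‖ := real_inner_le_norm _ _
      _ ≤ L * ‖x - xstar‖ * ‖x - xstar‖ := by gcongr; exact hsmooth x xstar
      _ = L * ‖x - xstar‖ ^ 2 := by ring
  have hdescent := le_add_inner_gradient_add_of_lipschitz_gradient hf hsmooth x xstar
  have hq := hquasar x
  rw [← neg_sub x xstar, inner_neg_right, norm_neg] at hdescent hq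
  have hγ_inv : γ * (1 / γ * -I) = -I := by field_simp
  have key : γ * μ * ‖x - xstar‖ ^ 2 ≤ (2 - γ) * L * ‖x - xstar‖ ^ 2 := by
    nlinarith [mul_le_mul_of_nonneg_left (hq.trans hdescent) hγ0.le,
      mul_le_mul_of_nonneg_left hI (sub_nonneg.mpr hγ1)]
  exact le_of_mul_le_mul_right key hr

end StrongQuasarConvex

theorem smoothness_vs_strong_quasar_general {n : ℕ} (hn : 0 < n)
    (f : EuclideanSpace ℝ (Fin n) → ℝ) (hdiff : Differentiable ℝ f)
    (γ μ : ℝ) (hγ : γ ∈ Set.Ioc (0:ℝ) 1)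
    (xstar : EuclideanSpace ℝ (Fin n)) (hmin : ∀ x, f xstar ≤ f x)
    (hquasar : ∀ x, f xstar ≥ f x + (1/γ) * ⟪gradient f x, xstar - x⟫
      + (μ/2) * ‖xstar - x‖^2)
    (L : ℝ) (hsmooth : ∀ x y, ‖gradient f x - gradient f y‖ ≤ L * ‖x - y‖) :
    L ≥ γ * μ / (2 - γ) := by
  have : Nonempty (Fin n) := ⟨⟨0, hn⟩⟩
  rw [ge_iff_le, div_le_iff₀ (by linarith [hγ.2])]
  have hcrit : gradient f xstar = 0 := IsLocalMin.gradient_eq_zero (.of_forall hmin)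
  linarith [StrongQuasarConvex.mul_le_two_sub_mul_of_lipschitz_gradient hdiff hγ hcrit hquasar
    hsmooth]

theorem smoothness_vs_strong_quasar {n : ℕ} (hn : 0 < n)
    (f : EuclideanSpace ℝ (Fin n) → ℝ) (hdiff : Differentiable ℝ f)
    (γ μ : ℝ) (hγ : γ ∈ Set.Ioc (0:ℝ) 1) (hμ : 0 ≤ μ)
    (xstar : EuclideanSpace ℝ (Fin n)) (hmin : ∀ x, f xstar ≤ f x)
    (hquasar : ∀ x, f xstar ≥ f x + (1/γ) * ⟪gradient f x, xstar - x⟫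
      + (μ/2) * ‖xstar - x‖^2)
    (L : ℝ) (hsmooth : ∀ x y, ‖gradient f x - gradient f y‖ ≤ L * ‖x - y‖) :
    L ≥ γ * μ / (2 - γ) :=
  smoothness_vs_strong_quasar_general hn f hdiff γ μ hγ xstar hmin hquasar L hsmooth
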